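/- arXiv:2208.12728 — 6 statements merged into one kernel-verified Lean document; each statement's English description precedes it below -/
import Mathlib

section
/- Let Y be a Hilbert space, Φ ∈ L(Y), D ∈ L(U;Y). If for every y₀ ∈ Y the value sup over n ∈ ℕ⁺ of inf over sequences (uᵢ) ∈ l²(ℕ⁺;U) of the truncated cost Jₙ(u;y₀) = Σ_{i=1}^n (‖yᵢ‖² + ‖uᵢ‖²) is finite (where y_i = Φ y_{i-1} + D u_i), then the infinite-horizon cost J(u;y₀) = Σ_{i=1}^∞ (‖yᵢ‖² + ‖uᵢ‖²) attains a finite infimum over u ∈ l²(ℕ⁺;U), i.e., V(y₀) = inf_u J(u;y₀) < ∞ for all y₀ ∈ Y. Conversely, if V(y₀) < ∞ for all y₀, then the supremum over n of the truncated infima is finite. -/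
open scoped BigOperators

variable {Y U : Type*}

/-- Trajectory of the discrete system `y_{i+1} = Φ y_i + D u_{i+1}`, where `u i` denotes
the control `u_{i+1}`. -/
def discreteTraj [NormedAddCommGroup Y] [NormedSpace ℝ Y]
    [NormedAddCommGroup U] [NormedSpace ℝ U]
    (Φ : Y →L[ℝ] Y) (D : U →L[ℝ] Y) (y₀ : Y) (u : ℕ → U) : ℕ → Y
  | 0 => y₀
  | n + 1 => Φ (discreteTraj Φ D y₀ u n) + D (u n)

/-
The converse direction is immediate. For the direct one, the square root of the
truncated value `inf_u J_n(u; y)` is a continuous seminorm `p_n` on `Y`, being an infimum of norms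
of a vector that depends linearly on `(y, u)`. The hypothesis says that the family `(p_n)` is
pointwise bounded, so by Banach–Steinhaus `inf_u J_n(u; y) ≤ A‖y‖²` uniformly in `n`. On a horizon
`N > 2A` some state of a near-optimal trajectory then satisfies `‖y_i‖² ≤ ‖y‖²/2`. Concatenating
such phases, each costing at most `A` times the squared norm of its initial state while halving
that squared norm, gives a control of total cost at most `2A‖y₀‖²`.
-/

namespace LinearMap

variable {𝕜 E F G : Type*} [NormedField 𝕜] [AddCommGroup E] [Module 𝕜 E]
  [AddCommGroup F] [Module 𝕜 F] [SeminormedAddCommGroup G] [NormedSpace 𝕜 G]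

lemma bddBelow_range_norm_apply_prod (L : E × F →ₗ[𝕜] G) (x : E) :
    BddBelow (Set.range fun v => ‖L (x, v)‖) :=
  ⟨0, Set.forall_mem_range.2 fun _ => norm_nonneg _⟩

noncomputable def infNormSeminorm (L : E × F →ₗ[𝕜] G) : Seminorm 𝕜 E :=
  Seminorm.ofSMulLE (fun x => ⨅ v, ‖L (x, v)‖)
    (le_antisymm
      (ciInf_le_of_le (L.bddBelow_range_norm_apply_prod 0) 0 <| by
        rw [Prod.mk_zero_zero, map_zero, norm_zero])
      (le_ciInf fun _ => norm_nonneg _))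
    (fun x y => le_ciInf_add_ciInf fun v w =>
      ciInf_le_of_le (L.bddBelow_range_norm_apply_prod _) (v + w) <| by
        simpa only [← map_add, Prod.mk_add_mk] using norm_add_le (L (x, v)) (L (y, w)))
    (fun a x => by
      rw [Real.mul_iInf_of_nonneg (norm_nonneg a)]
      exact le_ciInf fun v => ciInf_le_of_le (L.bddBelow_range_norm_apply_prod _) (a • v) <| by
        rw [← Prod.smul_mk, map_smul, norm_smul])

lemma infNormSeminorm_apply (L : E × F →ₗ[𝕜] G) (x : E) :
    L.infNormSeminorm x = ⨅ v, ‖L (x, v)‖ := rfl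

lemma infNormSeminorm_le (L : E × F →ₗ[𝕜] G) (x : E) (v : F) :
    L.infNormSeminorm x ≤ ‖L (x, v)‖ :=
  ciInf_le (L.bddBelow_range_norm_apply_prod x) v

lemma continuous_infNormSeminorm [TopologicalSpace E] [IsTopologicalAddGroup E]
    (L : E × F →ₗ[𝕜] G) (hL : Continuous fun x => L (x, 0)) :
    Continuous L.infNormSeminorm :=
  Seminorm.continuous_of_le (q := (normSeminorm 𝕜 G).comp (L.comp (LinearMap.inl 𝕜 E F)))
    (continuous_norm.comp hL) fun x => L.infNormSeminorm_le x 0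

end LinearMap

theorem Seminorm.exists_forall_le_mul_norm_of_bddAbove {ι 𝕜 E : Type*}
    [NontriviallyNormedField 𝕜] [NormedAddCommGroup E] [NormedSpace 𝕜 E] [CompleteSpace E]
    (p : ι → Seminorm 𝕜 E) (hp : ∀ i, Continuous (p i))
    (hbdd : ∀ x, BddAbove (Set.range fun i => p i x)) :
    ∃ C, ∀ i x, p i x ≤ C * ‖x‖ := by
  have hbdd' : BddAbove (Set.range p) := Seminorm.bddAbove_range_iff.2 hbdd
  obtain ⟨C, -, hC⟩ := (⨆ i, p i).bound_of_continuous_normedSpace <| by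
    rw [Seminorm.coe_iSup_eq hbdd']
    exact Seminorm.continuous_iSup p hp hbdd'
  exact ⟨C, fun i x => (le_ciSup hbdd' i x).trans (hC x)⟩

lemma diag_eq_of_forall_lt_eq {α : Type*} {T : ℕ → ℕ} (hT : StrictMono T) {v : ℕ → ℕ → α}
    (hv : ∀ k, ∀ t < T k, v (k + 1) t = v k t) (k : ℕ) : ∀ t < T k, v (t + 1) t = v k t := by
  have hstable : ∀ k k', k ≤ k' → ∀ t < T k, v k' t = v k t := by
    intro k k' hkk'
    induction k', hkk' using Nat.le_induction with
    | base => exact fun _ _ => rfl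
    | succ k' hkk' ih =>
      exact fun t ht => (hv k' t (ht.trans_le (hT.monotone hkk'))).trans (ih t ht)
  intro t ht
  rcases le_total (t + 1) k with htk | hkt
  · exact (hstable _ _ htk t ((Nat.lt_succ_self t).trans_le (hT.id_le _))).symm
  · exact hstable _ _ hkt t ht

def appendSeq {α : Type*} (T : ℕ) (v w : ℕ → α) (t : ℕ) : α :=
  if t < T then v t else w (t - T)

lemma appendSeq_of_lt {α : Type*} {T t : ℕ} (v w : ℕ → α) (ht : t < T) :
    appendSeq T v w t = v t :=
  if_pos ht

lemma appendSeq_add {α : Type*} (T : ℕ) (v w : ℕ → α) :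
    (fun j => appendSeq T v w (T + j)) = w := by
  ext j
  simp [appendSeq]

section System

variable [NormedAddCommGroup Y] [NormedSpace ℝ Y] [NormedAddCommGroup U] [NormedSpace ℝ U]
  (Φ : Y →L[ℝ] Y) (D : U →L[ℝ] Y)

lemma discreteTraj_add (y y' : Y) (u u' : ℕ → U) :
    ∀ n, discreteTraj Φ D (y + y') (u + u') n
      = discreteTraj Φ D y u n + discreteTraj Φ D y' u' n
  | 0 => rfl
  | n + 1 => by
    simp only [discreteTraj, discreteTraj_add y y' u u' n, Pi.add_apply, map_add]
    abel

lemma discreteTraj_smul (a : ℝ) (y : Y) (u : ℕ → U) :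
    ∀ n, discreteTraj Φ D (a • y) (a • u) n = a • discreteTraj Φ D y u n
  | 0 => rfl
  | n + 1 => by
    simp only [discreteTraj, discreteTraj_smul a y u n, Pi.smul_apply, map_smul, smul_add]

lemma discreteTraj_zero_ctrl (y : Y) :
    ∀ n, discreteTraj Φ D y (0 : ℕ → U) n = (Φ ^ n) y
  | 0 => rfl
  | n + 1 => by
    rw [discreteTraj, discreteTraj_zero_ctrl y n, pow_succ', Pi.zero_apply, map_zero, add_zero]
    rfl

lemma discreteTraj_add_horizon (y : Y) (u : ℕ → U) (m : ℕ) :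
    ∀ i, discreteTraj Φ D y u (m + i)
      = discreteTraj Φ D (discreteTraj Φ D y u m) (fun j => u (m + j)) i
  | 0 => rfl
  | i + 1 => by
    rw [← add_assoc, discreteTraj, discreteTraj_add_horizon y u m i]
    rfl

lemma discreteTraj_congr {y : Y} {u v : ℕ → U} {n : ℕ} (huv : ∀ i < n, u i = v i) :
    discreteTraj Φ D y u n = discreteTraj Φ D y v n := by
  induction n with
  | zero => rfl
  | succ n ih =>
    simp only [discreteTraj, ih fun i hi => huv i (by omega), huv n n.lt_succ_self]

noncomputable def lqCost (y : Y) (u : ℕ → U) (n : ℕ) : ℝ :=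
  ∑ i ∈ Finset.range n, (‖discreteTraj Φ D y u (i + 1)‖ ^ 2 + ‖u i‖ ^ 2)

lemma lqCost_add_horizon (y : Y) (u : ℕ → U) (m k : ℕ) :
    lqCost Φ D y u (m + k)
      = lqCost Φ D y u m + lqCost Φ D (discreteTraj Φ D y u m) (fun j => u (m + j)) k := by
  simp only [lqCost, Finset.sum_range_add, add_assoc, discreteTraj_add_horizon Φ D y u m]

lemma lqCost_congr {y : Y} {u v : ℕ → U} {n : ℕ} (huv : ∀ i < n, u i = v i) :
    lqCost Φ D y u n = lqCost Φ D y v n :=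
  Finset.sum_congr rfl fun i hi => by
    have hi := Finset.mem_range.1 hi
    rw [discreteTraj_congr Φ D fun j hj => huv j (by omega), huv i hi]

lemma sum_norm_discreteTraj_sq_le_lqCost (y : Y) (u : ℕ → U) (n : ℕ) :
    ∑ i ∈ Finset.range n, ‖discreteTraj Φ D y u (i + 1)‖ ^ 2 ≤ lqCost Φ D y u n :=
  Finset.sum_le_sum fun _ _ => le_add_of_nonneg_right (sq_nonneg _)

-- Makes `√(lqCost y u n)` the norm of a vector linear in `(y, u)`, so that its infimum over `u`
-- is a seminorm in `y`.
noncomputable def lqCostVec (n : ℕ) :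
    Y × (ℕ → U) →ₗ[ℝ] PiLp 2 (fun _ : Fin n => WithLp 2 (Y × U)) where
  toFun p := WithLp.toLp 2 fun i => WithLp.toLp 2 (discreteTraj Φ D p.1 p.2 (i + 1), p.2 i)
  map_add' p q := by
    ext i : 1
    simp [discreteTraj_add, ← WithLp.toLp_add]
  map_smul' a p := by
    ext i : 1
    simp [discreteTraj_smul, ← WithLp.toLp_smul]

lemma norm_lqCostVec_sq (n : ℕ) (y : Y) (u : ℕ → U) :
    ‖lqCostVec Φ D n (y, u)‖ ^ 2 = lqCost Φ D y u n := by
  rw [PiLp.norm_sq_eq_of_L2, lqCost, ← Fin.sum_univ_eq_sum_range]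
  simp [lqCostVec, WithLp.prod_norm_sq_eq_of_L2]

lemma continuous_lqCostVec_zero_ctrl (n : ℕ) :
    Continuous fun y : Y => lqCostVec Φ D n (y, 0) := by
  refine (PiLp.continuous_toLp _ _).comp (continuous_pi fun i => ?_)
  simp only [discreteTraj_zero_ctrl]
  exact (WithLp.prod_continuous_toLp _ _ _).comp
    ((Φ ^ (i.1 + 1)).continuous.prodMk continuous_const)

lemma lqCost_mono (y : Y) (u : ℕ → U) : Monotone (lqCost Φ D y u) := fun _ _ h =>
  Finset.sum_le_sum_of_subset_of_nonneg (Finset.range_subset_range.2 h) fun _ _ _ => by positivity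

lemma lqCost_zero_zero (n : ℕ) : lqCost Φ D (0 : Y) (0 : ℕ → U) n = 0 := by
  rw [← norm_lqCostVec_sq, Prod.mk_zero_zero, map_zero, norm_zero, sq, zero_mul]

-- `valueSeminorm Φ D n y ^ 2` is the truncated value `inf_u J_n(u; y)`.
noncomputable def valueSeminorm (n : ℕ) : Seminorm ℝ Y :=
  (lqCostVec Φ D n).infNormSeminorm

lemma valueSeminorm_le_sqrt_lqCost (n : ℕ) (y : Y) (u : ℕ → U) :
    valueSeminorm Φ D n y ≤ √(lqCost Φ D y u n) := by
  rw [← norm_lqCostVec_sq, Real.sqrt_sq (norm_nonneg _)]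
  exact (lqCostVec Φ D n).infNormSeminorm_le y u

lemma exists_sqrt_lqCost_lt {n : ℕ} {y : Y} {r : ℝ} (h : valueSeminorm Φ D n y < r) :
    ∃ u : ℕ → U, √(lqCost Φ D y u n) < r := by
  rw [valueSeminorm, LinearMap.infNormSeminorm_apply] at h
  obtain ⟨u, hu⟩ := exists_lt_of_ciInf_lt h
  exact ⟨u, by rwa [← norm_lqCostVec_sq, Real.sqrt_sq (norm_nonneg _)]⟩

lemma continuous_valueSeminorm (n : ℕ) : Continuous (valueSeminorm Φ D n) :=
  (lqCostVec Φ D n).continuous_infNormSeminorm (continuous_lqCostVec_zero_ctrl Φ D n)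

end System

section Stabilization

variable [NormedAddCommGroup Y] [NormedSpace ℝ Y] [NormedAddCommGroup U] [NormedSpace ℝ U]
  (Φ : Y →L[ℝ] Y) (D : U →L[ℝ] Y)

lemma exists_uniform_lqCost_bound [CompleteSpace Y]
    (h : ∀ y : Y, ∃ M, ∀ n, ∃ u : ℕ → U, lqCost Φ D y u n ≤ M) :
    ∃ A, 0 ≤ A ∧ ∀ n (y : Y), ∃ u : ℕ → U, lqCost Φ D y u n ≤ A * ‖y‖ ^ 2 := by
  have hbdd : ∀ y : Y, BddAbove (Set.range fun n => valueSeminorm Φ D n y) := fun y => by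
    obtain ⟨M, hM⟩ := h y
    refine ⟨√M, Set.forall_mem_range.2 fun n => ?_⟩
    obtain ⟨u, hu⟩ := hM n
    exact (valueSeminorm_le_sqrt_lqCost Φ D n y u).trans (Real.sqrt_le_sqrt hu)
  obtain ⟨C, hC⟩ := Seminorm.exists_forall_le_mul_norm_of_bddAbove _
    (continuous_valueSeminorm Φ D) hbdd
  refine ⟨(|C| + 1) ^ 2, by positivity, fun n y => ?_⟩
  rcases eq_or_ne y 0 with rfl | hy
  · exact ⟨0, by rw [lqCost_zero_zero, norm_zero]; positivity⟩
  have hlt : valueSeminorm Φ D n y < (|C| + 1) * ‖y‖ :=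
    (hC n y).trans_lt <| mul_lt_mul_of_pos_right ((le_abs_self C).trans_lt (lt_add_one _))
      (norm_pos_iff.2 hy)
  obtain ⟨u, hu⟩ := exists_sqrt_lqCost_lt Φ D hlt
  refine ⟨u, ?_⟩
  rw [← mul_pow]
  exact ((Real.sqrt_lt' (by positivity)).1 hu).le

lemma exists_lqCost_le_and_norm_sq_le_half {A : ℝ}
    (hA : ∀ n (y : Y), ∃ u : ℕ → U, lqCost Φ D y u n ≤ A * ‖y‖ ^ 2) (y : Y) :
    ∃ m, 0 < m ∧ ∃ u : ℕ → U,
      lqCost Φ D y u m ≤ A * ‖y‖ ^ 2 ∧ ‖discreteTraj Φ D y u m‖ ^ 2 ≤ ‖y‖ ^ 2 / 2 := by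
  set N := ⌈2 * A⌉₊ + 1
  obtain ⟨u, hu⟩ := hA N y
  suffices ∃ i < N, ‖discreteTraj Φ D y u (i + 1)‖ ^ 2 ≤ ‖y‖ ^ 2 / 2 by
    obtain ⟨i, hiN, hi⟩ := this
    exact ⟨i + 1, i.succ_pos, u, (lqCost_mono Φ D y u hiN).trans hu, hi⟩
  by_contra! hbig
  have hN : 2 * A ≤ N := (Nat.le_ceil _).trans (by simp [N])
  have := calc (N : ℝ) * (‖y‖ ^ 2 / 2)
      = ∑ i ∈ Finset.range N, ‖y‖ ^ 2 / 2 := by simp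
    _ < ∑ i ∈ Finset.range N, ‖discreteTraj Φ D y u (i + 1)‖ ^ 2 :=
      Finset.sum_lt_sum_of_nonempty ⟨0, by simp [N]⟩ fun i hi => hbig i (Finset.mem_range.1 hi)
    _ ≤ A * ‖y‖ ^ 2 := (sum_norm_discreteTraj_sq_le_lqCost Φ D y u N).trans hu
  nlinarith [sq_nonneg ‖y‖]

end Stabilization

section Concatenation

variable [NormedAddCommGroup Y] [NormedSpace ℝ Y] [NormedAddCommGroup U] [NormedSpace ℝ U]
  (Φ : Y →L[ℝ] Y) (D : U →L[ℝ] Y)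

lemma discreteTraj_appendSeq (y : Y) (T : ℕ) (v w : ℕ → U) (k : ℕ) :
    discreteTraj Φ D y (appendSeq T v w) (T + k)
      = discreteTraj Φ D (discreteTraj Φ D y v T) w k := by
  rw [discreteTraj_add_horizon, appendSeq_add,
    discreteTraj_congr Φ D fun i hi => appendSeq_of_lt v w hi]

lemma lqCost_appendSeq (y : Y) (T : ℕ) (v w : ℕ → U) (k : ℕ) :
    lqCost Φ D y (appendSeq T v w) (T + k)
      = lqCost Φ D y v T + lqCost Φ D (discreteTraj Φ D y v T) w k := by
  rw [lqCost_add_horizon, appendSeq_add,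
    lqCost_congr Φ D fun i hi => appendSeq_of_lt v w hi,
    discreteTraj_congr Φ D fun i hi => appendSeq_of_lt v w hi]

variable (y₀ : Y) (m : Y → ℕ) (uc : Y → ℕ → U)

-- `(T k, v k)`: the control `v k` runs `k` phases of the strategy `(m, uc)` from `y₀`, the
-- phase started in state `z` lasting `m z` steps; `v (k + 1)` agrees with `v k` before `T k`.
noncomputable def phaseCtrl : ℕ → ℕ × (ℕ → U)
  | 0 => (0, 0)
  | k + 1 =>
    let T := (phaseCtrl k).1
    let v := (phaseCtrl k).2
    let z := discreteTraj Φ D y₀ v T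
    (T + m z, appendSeq T v (uc z))

lemma strictMono_phaseCtrl_fst (hm : ∀ y, 0 < m y) :
    StrictMono fun k => (phaseCtrl Φ D y₀ m uc k).1 :=
  strictMono_nat_of_lt_succ fun _ => Nat.lt_add_of_pos_right (hm _)

lemma lqCost_phaseCtrl_add_le {A : ℝ} (hA : 0 ≤ A)
    (hcost : ∀ y, lqCost Φ D y (uc y) (m y) ≤ A * ‖y‖ ^ 2)
    (hhalf : ∀ y, ‖discreteTraj Φ D y (uc y) (m y)‖ ^ 2 ≤ ‖y‖ ^ 2 / 2) (k : ℕ) :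
    let T := (phaseCtrl Φ D y₀ m uc k).1
    let v := (phaseCtrl Φ D y₀ m uc k).2
    lqCost Φ D y₀ v T + 2 * A * ‖discreteTraj Φ D y₀ v T‖ ^ 2 ≤ 2 * A * ‖y₀‖ ^ 2 := by
  -- a phase from `z` costs at most `A‖z‖²` and halves `‖z‖²`, so this potential never increases
  induction k with
  | zero => simp [phaseCtrl, lqCost, discreteTraj]
  | succ k ih =>
    set z := discreteTraj Φ D y₀ (phaseCtrl Φ D y₀ m uc k).2 (phaseCtrl Φ D y₀ m uc k).1
    simp only [phaseCtrl]
    rw [lqCost_appendSeq, discreteTraj_appendSeq]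
    nlinarith [hcost z, hhalf z]

lemma exists_ctrl_forall_lqCost_le {A : ℝ} (hA : 0 ≤ A)
    (h : ∀ y : Y, ∃ m, 0 < m ∧ ∃ u : ℕ → U,
      lqCost Φ D y u m ≤ A * ‖y‖ ^ 2 ∧ ‖discreteTraj Φ D y u m‖ ^ 2 ≤ ‖y‖ ^ 2 / 2) :
    ∃ u : ℕ → U, ∀ n, lqCost Φ D y₀ u n ≤ 2 * A * ‖y₀‖ ^ 2 := by
  choose m hm uc hcost hhalf using h
  have hT := strictMono_phaseCtrl_fst Φ D y₀ m uc hm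
  refine ⟨fun t => (phaseCtrl Φ D y₀ m uc (t + 1)).2 t, fun n => ?_⟩
  have hdiag := diag_eq_of_forall_lt_eq (v := fun k => (phaseCtrl Φ D y₀ m uc k).2) hT
    (fun _ _ ht => appendSeq_of_lt _ _ ht) n
  calc _ ≤ lqCost Φ D y₀ _ (phaseCtrl Φ D y₀ m uc n).1 := lqCost_mono Φ D y₀ _ (hT.id_le n)
    _ = lqCost Φ D y₀ (phaseCtrl Φ D y₀ m uc n).2 (phaseCtrl Φ D y₀ m uc n).1 :=
        lqCost_congr Φ D hdiag
    _ ≤ 2 * A * ‖y₀‖ ^ 2 :=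
        (le_add_of_nonneg_right (by positivity)).trans
          (lqCost_phaseCtrl_add_le Φ D y₀ m uc hA hcost hhalf n)

end Concatenation

lemma summable_of_forall_lqCost_le [NormedAddCommGroup Y] [NormedSpace ℝ Y]
    [NormedAddCommGroup U] [NormedSpace ℝ U] (Φ : Y →L[ℝ] Y) (D : U →L[ℝ] Y)
    {y : Y} {u : ℕ → U} {B : ℝ} (h : ∀ n, lqCost Φ D y u n ≤ B) :
    Summable (fun i => ‖u i‖ ^ 2) ∧
      Summable (fun i => ‖discreteTraj Φ D y u (i + 1)‖ ^ 2 + ‖u i‖ ^ 2) := by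
  have hsum := summable_of_sum_range_le (fun _ => by positivity) h
  refine ⟨hsum.of_nonneg_of_le (fun _ => by positivity) fun _ => ?_, hsum⟩
  exact le_add_of_nonneg_left (by positivity)

theorem stmt0_general
    [NormedAddCommGroup Y] [InnerProductSpace ℝ Y] [CompleteSpace Y]
    [NormedAddCommGroup U] [InnerProductSpace ℝ U]
    (Φ : Y →L[ℝ] Y) (D : U →L[ℝ] Y) :
    (∀ y₀ : Y, ∃ M : ℝ, ∀ n : ℕ, ∃ u : ℕ → U, Summable (fun i => ‖u i‖ ^ 2) ∧
        ∑ i ∈ Finset.range n,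
          (‖discreteTraj Φ D y₀ u (i + 1)‖ ^ 2 + ‖u i‖ ^ 2) ≤ M)
    ↔
    (∀ y₀ : Y, ∃ u : ℕ → U, Summable (fun i => ‖u i‖ ^ 2) ∧
        Summable (fun i => ‖discreteTraj Φ D y₀ u (i + 1)‖ ^ 2 + ‖u i‖ ^ 2)) := by
  constructor
  · intro h y₀
    obtain ⟨A, hA, hbound⟩ := exists_uniform_lqCost_bound Φ D fun y =>
      (h y).imp fun _ hM n => (hM n).imp fun _ hu => hu.2
    obtain ⟨u, hu⟩ := exists_ctrl_forall_lqCost_le Φ D y₀ hA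
      (exists_lqCost_le_and_norm_sq_le_half Φ D hbound)
    exact ⟨u, summable_of_forall_lqCost_le Φ D hu⟩
  · intro h y₀
    obtain ⟨u, hu, hsum⟩ := h y₀
    exact ⟨_, fun n => ⟨u, hu, hsum.sum_le_tsum (Finset.range n) fun _ _ => by positivity⟩⟩

/-- The discrete LQ problem is solvable (finite infimum of the infinite-horizon cost over
`l²` controls for every initial datum) iff the truncated infima are uniformly bounded
for every initial datum. -/
theorem stmt0
    [NormedAddCommGroup Y] [InnerProductSpace ℝ Y] [CompleteSpace Y]
    [NormedAddCommGroup U] [InnerProductSpace ℝ U] [CompleteSpace U]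
    (Φ : Y →L[ℝ] Y) (D : U →L[ℝ] Y) :
    (∀ y₀ : Y, ∃ M : ℝ, ∀ n : ℕ, ∃ u : ℕ → U, Summable (fun i => ‖u i‖ ^ 2) ∧
        ∑ i ∈ Finset.range n,
          (‖discreteTraj Φ D y₀ u (i + 1)‖ ^ 2 + ‖u i‖ ^ 2) ≤ M)
    ↔
    (∀ y₀ : Y, ∃ u : ℕ → U, Summable (fun i => ‖u i‖ ^ 2) ∧
        Summable (fun i => ‖discreteTraj Φ D y₀ u (i + 1)‖ ^ 2 + ‖u i‖ ^ 2)) :=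
  stmt0_general Φ D
end

section
/- Let {S(t)}_{t≥0} be a C₀-semigroup on a Hilbert space Y, B ∈ L(U;Y), T₀ > 0, N ∈ ℕ⁺, δ ∈ (0,1), C ≥ 0. Suppose that for all φ ∈ Y, ‖S(NT₀)*φ‖² ≤ C Σ_{i=1}^N ‖∫_{(i-1)T₀}^{iT₀} B*S(t)*φ dt‖_U² + δ‖φ‖². Then for every m ∈ ℕ⁺ and all φ ∈ Y, ‖S(mNT₀)*φ‖² ≤ C Σ_{i=1}^{mN} ‖∫_{(i-1)T₀}^{iT₀} B*S(t)*φ dt‖_U² + δ^m ‖φ‖². -/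
/-!
Write `T = S(N T₀)*`. The semigroup law turns `S(m N T₀)*` into the `m`-th iterate of `T`, and
the block observations of `T φ` are the blocks `N, …, 2N - 1` of `φ`, by a change of variables
`t ↦ N T₀ + t`. Applying the hypothesis to `T^[m] φ` and the induction hypothesis, multiplied by
`δ ≤ 1`, to `φ` then adds `N` blocks to the sum and one factor `δ` to the remainder.
-/

open ContinuousLinearMap

theorem apply_iterate_le_sum_add_pow_mul {X : Type*} (T : X → X) (q : X → ℝ)
    (obs : ℕ → X → ℝ) (N : ℕ) {C δ : ℝ} (hC : 0 ≤ C) (hδ₀ : 0 ≤ δ) (hδ₁ : δ ≤ 1)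
    (hobs_nonneg : ∀ i x, 0 ≤ obs i x) (hobs_apply : ∀ i x, obs i (T x) = obs (N + i) x)
    (hT : ∀ x, q (T x) ≤ C * ∑ i ∈ Finset.range N, obs i x + δ * q x) (m : ℕ) (x : X) :
    q (T^[m] x) ≤ C * ∑ i ∈ Finset.range (m * N), obs i x + δ ^ m * q x := by
  have hobs_iterate : ∀ k i y, obs i (T^[k] y) = obs (k * N + i) y := by
    intro k
    induction k with
    | zero => simp
    | succ k ih =>
      intro i y
      rw [Function.iterate_succ_apply, ih, hobs_apply, add_mul, one_mul, add_comm (k * N) N,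
        add_assoc]
  induction m with
  | zero => simp
  | succ m ih =>
    have hsum_nonneg : 0 ≤ C * ∑ i ∈ Finset.range (m * N), obs i x :=
      mul_nonneg hC (Finset.sum_nonneg fun i _ => hobs_nonneg i x)
    have hsplit : ∑ i ∈ Finset.range ((m + 1) * N), obs i x
        = ∑ i ∈ Finset.range (m * N), obs i x + ∑ i ∈ Finset.range N, obs (m * N + i) x := by
      rw [add_mul, one_mul, Finset.sum_range_add]
    calc q (T^[m + 1] x)
        ≤ C * ∑ i ∈ Finset.range N, obs (m * N + i) x + δ * q (T^[m] x) := by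
          rw [Function.iterate_succ_apply']
          simpa only [hobs_iterate] using hT (T^[m] x)
      _ ≤ C * ∑ i ∈ Finset.range N, obs (m * N + i) x
            + δ * (C * ∑ i ∈ Finset.range (m * N), obs i x + δ ^ m * q x) := by gcongr
      _ ≤ C * ∑ i ∈ Finset.range ((m + 1) * N), obs i x + δ ^ (m + 1) * q x := by
          rw [hsplit, pow_succ]
          linarith [mul_le_of_le_one_left hsum_nonneg hδ₁]

section Semigroup

variable {Y : Type*} [NormedAddCommGroup Y] [InnerProductSpace ℝ Y] [CompleteSpace Y]
  {S : ℝ → Y →L[ℝ] Y}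

theorem adjoint_semigroup_add_apply
    (hsemi : ∀ s t : ℝ, 0 ≤ s → 0 ≤ t → S (s + t) = (S s).comp (S t))
    {s t : ℝ} (hs : 0 ≤ s) (ht : 0 ≤ t) (φ : Y) :
    adjoint (S (s + t)) φ = adjoint (S t) (adjoint (S s) φ) := by
  rw [hsemi s t hs ht, adjoint_comp]
  rfl

theorem adjoint_semigroup_natCast_mul_apply
    (hsemi : ∀ s t : ℝ, 0 ≤ s → 0 ≤ t → S (s + t) = (S s).comp (S t))
    {a : ℝ} (ha : 0 ≤ a) {m : ℕ} (hm : 1 ≤ m) (φ : Y) :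
    adjoint (S (m * a)) φ = (adjoint (S a))^[m] φ := by
  induction m, hm using Nat.le_induction with
  | base => simp
  | succ m _ ih =>
    rw [Function.iterate_succ_apply', ← ih, Nat.cast_succ, add_one_mul,
      adjoint_semigroup_add_apply hsemi (by positivity) ha]

theorem integral_adjoint_semigroup_apply_adjoint {E : Type*} [NormedAddCommGroup E]
    [NormedSpace ℝ E] (hsemi : ∀ s t : ℝ, 0 ≤ s → 0 ≤ t → S (s + t) = (S s).comp (S t))
    (g : Y → E) {a b c : ℝ} (ha : 0 ≤ a) (hb : 0 ≤ b) (hc : 0 ≤ c) (φ : Y) :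
    ∫ t in b..c, g (adjoint (S t) (adjoint (S a) φ))
      = ∫ t in (a + b)..(a + c), g (adjoint (S t) φ) := by
  rw [← intervalIntegral.integral_comp_add_left (fun t => g (adjoint (S t) φ)) a]
  refine intervalIntegral.integral_congr fun t ht => ?_
  have ht₀ : 0 ≤ t := le_trans (le_min hb hc) ht.1
  simp only [adjoint_semigroup_add_apply hsemi ha ht₀]

end Semigroup

theorem stmt3_general {Y U : Type*}
    [NormedAddCommGroup Y] [InnerProductSpace ℝ Y] [CompleteSpace Y]
    [NormedAddCommGroup U] [InnerProductSpace ℝ U] [CompleteSpace U]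
    (S : ℝ → Y →L[ℝ] Y)
    (hsemi : ∀ s t : ℝ, 0 ≤ s → 0 ≤ t → S (s + t) = (S s).comp (S t))
    (B : U →L[ℝ] Y)
    (T₀ : ℝ) (hT₀ : 0 < T₀) (N : ℕ)
    (δ : ℝ) (hδ : δ ∈ Set.Ioo (0 : ℝ) 1) (C : ℝ) (hC : 0 ≤ C)
    (hobs : ∀ φ : Y,
      ‖(ContinuousLinearMap.adjoint (S (N * T₀))) φ‖ ^ 2 ≤
        C * ∑ i ∈ Finset.range N,
          ‖∫ t in ((i : ℝ) * T₀)..(((i : ℝ) + 1) * T₀),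
            (ContinuousLinearMap.adjoint B) ((ContinuousLinearMap.adjoint (S t)) φ)‖ ^ 2
        + δ * ‖φ‖ ^ 2) :
    ∀ m : ℕ, 1 ≤ m → ∀ φ : Y,
      ‖(ContinuousLinearMap.adjoint (S (m * N * T₀))) φ‖ ^ 2 ≤
        C * ∑ i ∈ Finset.range (m * N),
          ‖∫ t in ((i : ℝ) * T₀)..(((i : ℝ) + 1) * T₀),
            (ContinuousLinearMap.adjoint B) ((ContinuousLinearMap.adjoint (S t)) φ)‖ ^ 2
        + δ ^ m * ‖φ‖ ^ 2 := by
  intro m hm φ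
  have hNT₀ : 0 ≤ (N : ℝ) * T₀ := by positivity
  have hblock_shift : ∀ (i : ℕ) (ψ : Y),
      ‖∫ t in ((i : ℝ) * T₀)..(((i : ℝ) + 1) * T₀),
          adjoint B (adjoint (S t) (adjoint (S (N * T₀)) ψ))‖ ^ 2
        = ‖∫ t in (((N + i : ℕ) : ℝ) * T₀)..((((N + i : ℕ) : ℝ) + 1) * T₀),
          adjoint B (adjoint (S t) ψ)‖ ^ 2 := by
    intro i ψ
    rw [integral_adjoint_semigroup_apply_adjoint hsemi _ hNT₀ (by positivity) (by positivity)]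
    push_cast
    ring_nf
  rw [mul_assoc, adjoint_semigroup_natCast_mul_apply hsemi hNT₀ hm]
  exact apply_iterate_le_sum_add_pow_mul _ (‖·‖ ^ 2) _ N hC hδ.1.le hδ.2.le
    (fun _ _ => by positivity) hblock_shift hobs m φ

/-- Self-improvement of the discrete weak observability inequality under iteration:
if it holds with horizon `N T₀` and remainder `δ`, it holds with horizon `m N T₀` and
remainder `δ^m` for every `m ≥ 1`. -/
theorem stmt3 {Y U : Type*}
    [NormedAddCommGroup Y] [InnerProductSpace ℝ Y] [CompleteSpace Y]
    [NormedAddCommGroup U] [InnerProductSpace ℝ U] [CompleteSpace U]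
    (S : ℝ → Y →L[ℝ] Y)
    (hS0 : S 0 = ContinuousLinearMap.id ℝ Y)
    (hsemi : ∀ s t : ℝ, 0 ≤ s → 0 ≤ t → S (s + t) = (S s).comp (S t))
    (hcont : ∀ φ : Y, Continuous fun t : ℝ => (ContinuousLinearMap.adjoint (S t)) φ)
    (B : U →L[ℝ] Y)
    (T₀ : ℝ) (hT₀ : 0 < T₀) (N : ℕ) (hN : 1 ≤ N)
    (δ : ℝ) (hδ : δ ∈ Set.Ioo (0 : ℝ) 1) (C : ℝ) (hC : 0 ≤ C)
    (hobs : ∀ φ : Y,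
      ‖(ContinuousLinearMap.adjoint (S (N * T₀))) φ‖ ^ 2 ≤
        C * ∑ i ∈ Finset.range N,
          ‖∫ t in ((i : ℝ) * T₀)..(((i : ℝ) + 1) * T₀),
            (ContinuousLinearMap.adjoint B) ((ContinuousLinearMap.adjoint (S t)) φ)‖ ^ 2
        + δ * ‖φ‖ ^ 2) :
    ∀ m : ℕ, 1 ≤ m → ∀ φ : Y,
      ‖(ContinuousLinearMap.adjoint (S (m * N * T₀))) φ‖ ^ 2 ≤
        C * ∑ i ∈ Finset.range (m * N),
          ‖∫ t in ((i : ℝ) * T₀)..(((i : ℝ) + 1) * T₀),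
            (ContinuousLinearMap.adjoint B) ((ContinuousLinearMap.adjoint (S t)) φ)‖ ^ 2
        + δ ^ m * ‖φ‖ ^ 2 :=
  stmt3_general S hsemi B T₀ hT₀ N δ hδ C hC hobs
end

section
/- If T = kπ for some k ∈ ℕ⁺, then for every N ∈ ℕ⁺ and every C > 0 the inequality ‖(φ₁,φ₂)‖² ≤ C Σ_{j=1}^N |∫_{(j-1)T}^{jT} (φ₁ sin t + φ₂ cos t) dt|² fails for some (φ₁,φ₂) ∈ ℝ². Specifically, for (φ₁,φ₂) = (0,γ) with γ > 0, each integral ∫_{(j-1)T}^{jT} cos t dt = sin(jT) - sin((j-1)T) = 0 while ‖(0,γ)‖ = γ > 0. -/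
lemma sin_natCast_mul_natCast_mul_pi (n k : ℕ) : Real.sin (n * (k * Real.pi)) = 0 := by
  rw [← mul_assoc, ← Nat.cast_mul]
  exact Real.sin_nat_mul_pi (n * k)

lemma integral_cos_natCast_mul_pi_period (k j : ℕ) :
    ∫ t in ((j : ℝ) * (k * Real.pi))..(((j : ℝ) + 1) * (k * Real.pi)), Real.cos t = 0 := by
  rw [integral_cos, show (j : ℝ) + 1 = ((j + 1 : ℕ) : ℝ) by push_cast; ring,
    sin_natCast_mul_natCast_mul_pi, sin_natCast_mul_natCast_mul_pi, sub_zero]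

theorem stmt6_general (T : ℝ) (k : ℕ) (hT : T = k * Real.pi) :
    (∀ j : ℕ, (∫ t in ((j : ℝ) * T)..(((j : ℝ) + 1) * T), Real.cos t) = 0) ∧
    (∀ N : ℕ, 1 ≤ N → ∀ C : ℝ, 0 < C →
      ∃ φ₁ φ₂ : ℝ,
        ¬ (φ₁ ^ 2 + φ₂ ^ 2 ≤
            C * ∑ j ∈ Finset.range N,
              (∫ t in ((j : ℝ) * T)..(((j : ℝ) + 1) * T),
                (φ₁ * Real.sin t + φ₂ * Real.cos t)) ^ 2)) := by
  subst hT
  have hcos := integral_cos_natCast_mul_pi_period k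
  refine ⟨hcos, fun N _ C _ => ⟨0, 1, ?_⟩⟩
  simp [hcos]

/-- For pathological sampling periods `T = kπ` the weak observability inequality for the
harmonic oscillator fails for every `N` and `C`: each sampled integral of `cos` vanishes,
so the witness `(φ₁,φ₂) = (0,γ)` with `γ > 0` violates the inequality. -/
theorem stmt6 (T : ℝ) (k : ℕ) (hk : 1 ≤ k) (hT : T = k * Real.pi) :
    (∀ j : ℕ, (∫ t in ((j : ℝ) * T)..(((j : ℝ) + 1) * T), Real.cos t) = 0) ∧
    (∀ N : ℕ, 1 ≤ N → ∀ C : ℝ, 0 < C →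
      ∃ φ₁ φ₂ : ℝ,
        ¬ (φ₁ ^ 2 + φ₂ ^ 2 ≤
            C * ∑ j ∈ Finset.range N,
              (∫ t in ((j : ℝ) * T)..(((j : ℝ) + 1) * T),
                (φ₁ * Real.sin t + φ₂ * Real.cos t)) ^ 2)) :=
  stmt6_general T k hT
end

section
/- Let T > 0, N ∈ ℕ⁺, ε > 0. Let S(t)* denote the unitary group on L²(ℝ;ℂ) acting via Fourier multiplier e^{iξ²t} (the free Schrödinger group). Then there exists φ ∈ L²(ℝ;ℂ) with ‖φ‖ = 1 such that Σ_{i=1}^N ‖∫_{(i-1)T}^{iT} S(t)*φ dt‖ ≤ ε. Consequently, no inequality of the form ‖φ‖² = ‖S(NT)*φ‖² ≤ C Σ_{i=1}^N ‖∫_{(i-1)T}^{iT} S(t)*φ dt‖² + δ‖φ‖² with δ ∈ (0,1) and C ≥ 0 can hold for all φ ∈ L²(ℝ;ℂ). -/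
/-!
On the Fourier side, `∫_a^{a+T} S(t)*φ dt` is multiplication by `(e^{iξ²(a+T)} - e^{iξ²a})/(iξ²)`,
whose modulus `|e^{iξ²T} - 1|/ξ²` is at most `ηT/π` on the resonant band `|ξ²T - 2π| ≤ η ≤ π`.
A normalized `φ` supported in that band makes all `N` time integrals small at once, and testing
a weak observability inequality on such a `φ` gives `1 ≤ C ε² + δ`, impossible for small `ε`
since `δ < 1`.
-/

open MeasureTheory Real Filter Topology
open scoped ENNReal

theorem exists_memLp_eLpNorm_eq_one_of_ne_zero_of_ne_top
    {α : Type*} [MeasurableSpace α] {μ : Measure α} {p : ℝ≥0∞} (hp : p ≠ 0) {s : Set α}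
    (hs : MeasurableSet s) (hμ0 : μ s ≠ 0) (hμ : μ s ≠ ∞) :
    ∃ φ : α → ℂ, MemLp φ p μ ∧ eLpNorm φ p μ = 1 ∧ ∀ x ∉ s, φ x = 0 := by
  set x := μ s ^ (1 / p.toReal)
  have hx0 : x ≠ 0 := by simp [x, ENNReal.rpow_eq_zero_iff, hμ0, hμ]
  have hx : x ≠ ∞ := by simp [x, ENNReal.rpow_eq_top_iff, hμ0, hμ]
  refine ⟨s.indicator fun _ => ((x⁻¹.toReal : ℝ) : ℂ), memLp_indicator_const p hs _ (.inr hμ),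
    ?_, fun _ h => Set.indicator_of_notMem h _⟩
  rw [eLpNorm_indicator_const' hs hμ0 hp, ← ofReal_norm, Complex.norm_real, Real.norm_eq_abs,
    abs_of_nonneg ENNReal.toReal_nonneg, ENNReal.ofReal_toReal (ENNReal.inv_ne_top.2 hx0),
    ENNReal.inv_mul_cancel hx0 hx]

theorem norm_integral_exp_I_mul {c : ℝ} (hc : c ≠ 0) (a b : ℝ) :
    ‖∫ t in a..b, Complex.exp (Complex.I * c * t)‖ =
      ‖Complex.exp (Complex.I * (c * (b - a) : ℝ)) - 1‖ / |c| := by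
  have hc' : Complex.I * c ≠ 0 := mul_ne_zero Complex.I_ne_zero (Complex.ofReal_ne_zero.2 hc)
  have hsplit : Complex.exp (Complex.I * c * b) - Complex.exp (Complex.I * c * a) =
      Complex.exp ((c * a : ℝ) * Complex.I) *
        (Complex.exp (Complex.I * (c * (b - a) : ℝ)) - 1) := by
    rw [mul_sub, ← Complex.exp_add, mul_one]; push_cast; ring_nf
  rw [integral_exp_mul_complex hc', hsplit, norm_div, norm_mul, Complex.norm_exp_ofReal_mul_I,
    one_mul, norm_mul, Complex.norm_I, one_mul, Complex.norm_real, Real.norm_eq_abs]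

theorem norm_exp_I_mul_sub_one_le_abs_sub_two_pi (x : ℝ) :
    ‖Complex.exp (Complex.I * x) - 1‖ ≤ |x - 2 * π| := by
  have h : Complex.exp (Complex.I * x) = Complex.exp (Complex.I * (x - 2 * π : ℝ)) := by
    rw [← Complex.exp_periodic.sub_eq]; push_cast; ring_nf
  rw [h, ← Real.norm_eq_abs]
  exact Real.norm_exp_I_mul_ofReal_sub_one_le

theorem norm_integral_exp_I_mul_le_of_abs_mul_sub_two_pi_le {c T η a b : ℝ} (hT : 0 < T)
    (hη : η ≤ π) (hc : |c * T - 2 * π| ≤ η) (hab : b - a = T) :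
    ‖∫ t in a..b, Complex.exp (Complex.I * c * t)‖ ≤ η * T / π := by
  have hcT : π ≤ c * T := by linarith [(abs_le.1 hc).1]
  have hc0 : 0 < c := pos_of_mul_pos_left (pi_pos.trans_le hcT) hT.le
  rw [norm_integral_exp_I_mul hc0.ne', hab, abs_of_pos hc0, div_le_div_iff₀ hc0 pi_pos]
  calc ‖Complex.exp (Complex.I * (c * T : ℝ)) - 1‖ * π ≤ η * π := by
        gcongr; exact (norm_exp_I_mul_sub_one_le_abs_sub_two_pi _).trans hc
    _ ≤ η * T * c := by nlinarith [(abs_nonneg _).trans hc]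

theorem abs_sq_mul_sub_two_pi_le_of_mem_Ioc {T η ξ : ℝ} (hT : 0 < T)
    (hξ : ξ ∈ Set.Ioc √((2 * π - η) / T) √((2 * π + η) / T)) :
    |ξ ^ 2 * T - 2 * π| ≤ η := by
  have hξ0 : 0 < ξ := (sqrt_nonneg _).trans_lt hξ.1
  have hlo : (2 * π - η) / T ≤ ξ ^ 2 := (sqrt_le_left hξ0.le).1 hξ.1.le
  have hhi : ξ ^ 2 ≤ (2 * π + η) / T := (le_sqrt' hξ0).1 hξ.2
  rw [div_le_iff₀ hT] at hlo
  rw [le_div_iff₀ hT] at hhi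
  exact abs_le.2 ⟨by linarith, by linarith⟩

/-- `∫_a^b S(t)*φ dt`, written on the Fourier side. -/
noncomputable def schrodingerAdjointIntegral (φ : ℝ → ℂ) (a b : ℝ) : ℝ → ℂ :=
  fun ξ => ∫ t in a..b, Complex.exp (Complex.I * (ξ ^ 2) * t) * φ ξ

theorem eLpNorm_schrodingerAdjointIntegral_le {φ : ℝ → ℂ} {T η a b : ℝ} (hT : 0 < T)
    (hη : η ≤ π) (hab : b - a = T) (hφ : ∀ ξ, φ ξ ≠ 0 → |ξ ^ 2 * T - 2 * π| ≤ η)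
    (p : ℝ≥0∞) :
    eLpNorm (schrodingerAdjointIntegral φ a b) p volume ≤
      ENNReal.ofReal (η * T / π) * eLpNorm φ p volume := by
  refine eLpNorm_le_mul_eLpNorm_of_ae_le_mul (ae_of_all _ fun ξ => ?_) p
  rw [schrodingerAdjointIntegral, intervalIntegral.integral_mul_const, norm_mul]
  by_cases h0 : φ ξ = 0
  · simp [h0]
  gcongr
  exact_mod_cast norm_integral_exp_I_mul_le_of_abs_mul_sub_two_pi_le hT hη (hφ ξ h0) hab

theorem exists_eLpNorm_eq_one_sum_eLpNorm_schrodingerAdjointIntegral_le {T ε : ℝ} (hT : 0 < T)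
    (hε : 0 < ε) (N : ℕ) {p : ℝ≥0∞} (hp : p ≠ 0) :
    ∃ φ : ℝ → ℂ, MemLp φ p volume ∧ eLpNorm φ p volume = 1 ∧
      ∑ i ∈ Finset.range N,
        eLpNorm (schrodingerAdjointIntegral φ (i * T) ((i + 1) * T)) p volume ≤
          ENNReal.ofReal ε := by
  set η := min π (ε * π / (T * (N + 1)))
  have hη0 : 0 < η := lt_min pi_pos (by positivity)
  have hηπ : η ≤ π := min_le_left _ _
  have hab : √((2 * π - η) / T) < √((2 * π + η) / T) :=
    sqrt_lt_sqrt (div_nonneg (by linarith) hT.le) (by gcongr; linarith)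
  obtain ⟨φ, hφ, hφ1, hφs⟩ := exists_memLp_eLpNorm_eq_one_of_ne_zero_of_ne_top (μ := volume) hp
    (measurableSet_Ioc (a := √((2 * π - η) / T)) (b := √((2 * π + η) / T)))
    (by simpa using hab) (by simp)
  refine ⟨φ, hφ, hφ1, ?_⟩
  have hterm (i : ℕ) :
      eLpNorm (schrodingerAdjointIntegral φ (i * T) ((i + 1) * T)) p volume ≤
        ENNReal.ofReal (η * T / π) := by
    simpa [hφ1] using eLpNorm_schrodingerAdjointIntegral_le hT hηπ (by ring)
      (fun ξ h => abs_sq_mul_sub_two_pi_le_of_mem_Ioc hT (not_imp_comm.1 (hφs ξ) h)) p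
  have hηT : η * T / π ≤ ε / (N + 1) := by
    have hη : η * (T * (N + 1)) ≤ ε * π := (le_div_iff₀ (by positivity)).1 (min_le_right _ _)
    rw [div_le_div_iff₀ pi_pos (by positivity)]
    linarith
  calc ∑ i ∈ Finset.range N,
        eLpNorm (schrodingerAdjointIntegral φ (i * T) ((i + 1) * T)) p volume
      ≤ N * ENNReal.ofReal (η * T / π) := by
        simpa using Finset.sum_le_sum fun i (_ : i ∈ Finset.range N) => hterm i
    _ = ENNReal.ofReal (N * (η * T / π)) := by
        rw [ENNReal.ofReal_mul (by positivity), ENNReal.ofReal_natCast]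
    _ ≤ ENNReal.ofReal ε := by
        refine ENNReal.ofReal_le_ofReal ((mul_le_mul_of_nonneg_left hηT N.cast_nonneg).trans ?_)
        rw [← mul_div_assoc, div_le_iff₀ (by positivity)]
        nlinarith

theorem not_forall_eLpNorm_sq_le_sum_eLpNorm_schrodingerAdjointIntegral_sq_add {T : ℝ}
    (hT : 0 < T) (N : ℕ) {p C δ : ℝ≥0∞} (hp : p ≠ 0) (hC : C ≠ ∞) (hδ : δ < 1) :
    ¬ ∀ φ : ℝ → ℂ, MemLp φ p volume →
      eLpNorm φ p volume ^ 2 ≤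
        C * ∑ i ∈ Finset.range N,
          eLpNorm (schrodingerAdjointIntegral φ (i * T) ((i + 1) * T)) p volume ^ 2 +
        δ * eLpNorm φ p volume ^ 2 := by
  intro H
  have hlim : Tendsto (fun ε : ℝ => C * ENNReal.ofReal ε ^ 2 + δ) (𝓝[>] 0) (𝓝 δ) := by
    have : Continuous (fun ε : ℝ => C * ENNReal.ofReal ε ^ 2 + δ) :=
      ((ENNReal.continuous_const_mul hC).comp
        ((ENNReal.continuous_pow 2).comp ENNReal.continuous_ofReal)).add continuous_const
    exact (this.tendsto' 0 δ (by simp)).mono_left nhdsWithin_le_nhds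
  obtain ⟨ε, hlt, hε⟩ := ((hlim.eventually (gt_mem_nhds hδ)).and self_mem_nhdsWithin).exists
  obtain ⟨φ, hφ, hφ1, hsum⟩ :=
    exists_eLpNorm_eq_one_sum_eLpNorm_schrodingerAdjointIntegral_le hT hε N hp
  have h := H φ hφ
  rw [hφ1, one_pow, mul_one] at h
  refine (h.trans ?_).not_gt hlt
  gcongr
  exact (Finset.sum_sq_le_sq_sum_of_nonneg fun _ _ => zero_le).trans (by gcongr)

theorem stmt11_general (T : ℝ) (hT : 0 < T) (N : ℕ) (ε : ℝ) (hε : 0 < ε) :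
    (∃ φ : ℝ → ℂ, MemLp φ 2 volume ∧ eLpNorm φ 2 volume = 1 ∧
      ∑ i ∈ Finset.range N,
        eLpNorm (fun ξ : ℝ =>
          ∫ t in ((i : ℝ) * T)..(((i : ℝ) + 1) * T),
            Complex.exp (Complex.I * (ξ ^ 2) * t) * φ ξ) 2 volume
        ≤ ENNReal.ofReal ε) ∧
    (∀ C : ℝ, 0 ≤ C → ∀ δ : ℝ, δ ∈ Set.Ioo (0 : ℝ) 1 →
      ¬ ∀ φ : ℝ → ℂ, MemLp φ 2 volume →
        (eLpNorm φ 2 volume) ^ 2 ≤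
          ENNReal.ofReal C * ∑ i ∈ Finset.range N,
            (eLpNorm (fun ξ : ℝ =>
              ∫ t in ((i : ℝ) * T)..(((i : ℝ) + 1) * T),
                Complex.exp (Complex.I * (ξ ^ 2) * t) * φ ξ) 2 volume) ^ 2
          + ENNReal.ofReal δ * (eLpNorm φ 2 volume) ^ 2) := by
  refine ⟨exists_eLpNorm_eq_one_sum_eLpNorm_schrodingerAdjointIntegral_le hT hε N two_ne_zero,
    fun C _ δ hδ => ?_⟩
  exact not_forall_eLpNorm_sq_le_sum_eLpNorm_schrodingerAdjointIntegral_sq_add hT N two_ne_zero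
    ENNReal.ofReal_ne_top (ENNReal.ofReal_lt_one.2 hδ.2)

/-- For the free Schrödinger group, represented on the Fourier side as multiplication by
`e^{iξ²t}` on `L²(ℝ;ℂ)`: for every `T, N, ε` there is a normalized `φ` whose sampled time
averages are all `ε`-small; consequently no weak observability inequality with `δ < 1`
can hold. -/
theorem stmt11 (T : ℝ) (hT : 0 < T) (N : ℕ) (hN : 1 ≤ N) (ε : ℝ) (hε : 0 < ε) :
    (∃ φ : ℝ → ℂ, MemLp φ 2 volume ∧ eLpNorm φ 2 volume = 1 ∧
      ∑ i ∈ Finset.range N,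
        eLpNorm (fun ξ : ℝ =>
          ∫ t in ((i : ℝ) * T)..(((i : ℝ) + 1) * T),
            Complex.exp (Complex.I * (ξ ^ 2) * t) * φ ξ) 2 volume
        ≤ ENNReal.ofReal ε) ∧
    (∀ C : ℝ, 0 ≤ C → ∀ δ : ℝ, δ ∈ Set.Ioo (0 : ℝ) 1 →
      ¬ ∀ φ : ℝ → ℂ, MemLp φ 2 volume →
        (eLpNorm φ 2 volume) ^ 2 ≤
          ENNReal.ofReal C * ∑ i ∈ Finset.range N,
            (eLpNorm (fun ξ : ℝ =>
              ∫ t in ((i : ℝ) * T)..(((i : ℝ) + 1) * T),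
                Complex.exp (Complex.I * (ξ ^ 2) * t) * φ ξ) 2 volume) ^ 2
          + ENNReal.ofReal δ * (eLpNorm φ 2 volume) ^ 2) :=
  stmt11_general T hT N ε hε
end

section
/- Let Y, U be Hilbert spaces, R ∈ L(Y), O ∈ L(Y;Z) for a Hilbert space Z, and suppose ‖Rz‖² ≤ C‖Oz‖² + δ‖z‖² for all z ∈ Y, where C > 0 and δ ∈ (0,1). Then for each y₀ ∈ Y there exists v ∈ Z such that (1/C)‖v‖² + (1/δ)‖R*y₀ - O*v‖² ≤ ‖y₀‖². -/
/-!
Minimise the quadratic functional `z ↦ ½(C‖Oz‖² + δ‖z‖²) - ⟪R*y₀, z⟫`: by Lax–Milgram its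
minimiser `z` solves `(C O*O + δ I) z = R*y₀`. The control `v = C O z` then leaves the residual
`R*y₀ - O*v = δ z`, so the cost equals the energy `Q = C‖Oz‖² + δ‖z‖² = ⟪y₀, Rz⟫`. Cauchy–Schwarz
and the observability inequality give `Q ≤ ‖y₀‖ ‖Rz‖` and `‖Rz‖² ≤ Q`, hence `Q ≤ ‖y₀‖²`.
-/

open RealInnerProductSpace ContinuousLinearMap

theorem le_sq_of_le_mul_of_sq_le {q a b : ℝ} (hq : q ≤ a * b) (hb : b ^ 2 ≤ q) :
    q ≤ a ^ 2 := by
  -- `q ≤ ab ≤ (a² + b²)/2 ≤ (a² + q)/2`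
  nlinarith [sq_nonneg (a - b)]

section

variable {V W : Type*} [NormedAddCommGroup V] [InnerProductSpace ℝ V] [CompleteSpace V]
  [NormedAddCommGroup W] [InnerProductSpace ℝ W] [CompleteSpace W]

theorem ContinuousLinearMap.surjective_of_coercive (A : V →L[ℝ] V) {c : ℝ} (hc : 0 < c)
    (hA : ∀ z, c * ‖z‖ * ‖z‖ ≤ ⟪A z, z⟫) : Function.Surjective A := by
  have coercive : IsCoercive ((innerSL ℝ).comp A) := ⟨c, hc, hA⟩
  intro b
  obtain ⟨z, rfl⟩ := coercive.continuousLinearEquivOfBilin.surjective b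
  refine ⟨z, ext_inner_right ℝ fun w => ?_⟩
  rw [coercive.continuousLinearEquivOfBilin_apply]
  rfl

theorem inner_adjoint_comp_self_add_smul_self (O : V →L[ℝ] W) (C δ : ℝ) (z : V) :
    ⟪(C • (adjoint O ∘L O) + δ • ContinuousLinearMap.id ℝ V) z, z⟫ =
      C * ‖O z‖ ^ 2 + δ * ‖z‖ ^ 2 := by
  simp [inner_add_left, real_inner_smul_left, adjoint_inner_left]

theorem surjective_adjoint_comp_self_add_smul (O : V →L[ℝ] W) {C δ : ℝ} (hC : 0 ≤ C)
    (hδ : 0 < δ) :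
    Function.Surjective (C • (adjoint O ∘L O) + δ • ContinuousLinearMap.id ℝ V) := by
  refine ContinuousLinearMap.surjective_of_coercive _ hδ fun z => ?_
  rw [inner_adjoint_comp_self_add_smul_self, mul_assoc, ← sq]
  nlinarith [mul_nonneg hC (sq_nonneg ‖O z‖)]

end

/-- Duality lemma: a weak observability inequality `‖Rz‖² ≤ C‖Oz‖² + δ‖z‖²` yields, for
each `y₀`, a `v` with `(1/C)‖v‖² + (1/δ)‖R*y₀ - O*v‖² ≤ ‖y₀‖²`. -/
theorem stmt13 {Y Z : Type*}
    [NormedAddCommGroup Y] [InnerProductSpace ℝ Y] [CompleteSpace Y]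
    [NormedAddCommGroup Z] [InnerProductSpace ℝ Z] [CompleteSpace Z]
    (R : Y →L[ℝ] Y) (O : Y →L[ℝ] Z) (C δ : ℝ) (hC : 0 < C) (hδ : δ ∈ Set.Ioo (0:ℝ) 1)
    (hobs : ∀ z : Y, ‖R z‖ ^ 2 ≤ C * ‖O z‖ ^ 2 + δ * ‖z‖ ^ 2) :
    ∀ y₀ : Y, ∃ v : Z,
      (1 / C) * ‖v‖ ^ 2 +
        (1 / δ) * ‖(ContinuousLinearMap.adjoint R) y₀ -
          (ContinuousLinearMap.adjoint O) v‖ ^ 2 ≤ ‖y₀‖ ^ 2 := by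
  intro y₀
  obtain ⟨z, hz⟩ := surjective_adjoint_comp_self_add_smul O hC.le hδ.1 (adjoint R y₀)
  have hresidual : adjoint R y₀ - adjoint O (C • O z) = δ • z := by
    rw [← hz]
    simp
  have hcost :
      (1 / C) * ‖C • O z‖ ^ 2 + (1 / δ) * ‖δ • z‖ ^ 2 = C * ‖O z‖ ^ 2 + δ * ‖z‖ ^ 2 := by
    rw [norm_smul, norm_smul, Real.norm_of_nonneg hC.le, Real.norm_of_nonneg hδ.1.le]
    field_simp
  have henergy : C * ‖O z‖ ^ 2 + δ * ‖z‖ ^ 2 = ⟪y₀, R z⟫ := by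
    rw [← inner_adjoint_comp_self_add_smul_self, hz, adjoint_inner_left]
  refine ⟨C • O z, ?_⟩
  rw [hresidual, hcost]
  exact le_sq_of_le_mul_of_sq_le (henergy ▸ real_inner_le_norm y₀ (R z)) (hobs z)
end

section
/- Let {S(t)}_{t≥0} be a C₀-semigroup on Y, B ∈ L(U;Y), T > 0, and suppose the set 𝒯 := {T > 0 : there exist N ∈ ℕ⁺, δ ∈ (0,1), C ≥ 0 with ‖S(NT)*φ‖² ≤ C Σ_{i=1}^N ‖∫_{(i-1)T}^{iT} B*S(t)*φ dt‖² + δ‖φ‖² for all φ ∈ Y}. Then 𝒯 is an open subset of (0,∞). -/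
/-!
The adjoint of a semigroup is again a semigroup, so it suffices to treat a strongly continuous
semigroup `A` observed through `P`. Composing the inequality at period `T₀` with itself
(the sample integrals of `A (N₀ T₀) φ` are later sample integrals of `φ`) improves `δ` to `δᵏ`
over `k N₀` periods. For `T` near `T₀`, run `N₀` further periods: `A (N T)` is then
`A (kN₀ T₀)` followed by an operator of norm at most `M` (uniform by Banach–Steinhaus), and
each sample integral moves by `O(|T - T₀|)` because its endpoints do. Choosing `k` with `M² δᵏ < 1/2` first, the defect
`M² (δᵏ + O(|T - T₀|²))` stays below `1/2` near `T₀`.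
-/

open Set Filter Topology

theorem ContinuousLinearMap.adjoint_semigroup_add {Y : Type*}
    [NormedAddCommGroup Y] [InnerProductSpace ℝ Y] [CompleteSpace Y] {S : ℝ → Y →L[ℝ] Y}
    (hS : ∀ s t : ℝ, 0 ≤ s → 0 ≤ t → S (s + t) = (S s).comp (S t))
    {s t : ℝ} (hs : 0 ≤ s) (ht : 0 ≤ t) :
    adjoint (S (s + t)) = (adjoint (S s)).comp (adjoint (S t)) := by
  -- a semigroup commutes with itself, so reversing the order in the adjoint is harmless
  rw [add_comm, hS t s ht hs, adjoint_comp]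

theorem exists_norm_le_of_continuous_apply {E F : Type*} [NormedAddCommGroup E]
    [NormedSpace ℝ E] [CompleteSpace E] [NormedAddCommGroup F] [NormedSpace ℝ F]
    {A : ℝ → E →L[ℝ] F} (hA : ∀ φ, Continuous fun t => A t φ) {s : Set ℝ}
    (hs : IsCompact s) : ∃ M, ∀ t ∈ s, ‖A t‖ ≤ M := by
  obtain ⟨M, hM⟩ := banach_steinhaus (g := fun t : s => A t) fun φ => by
    obtain ⟨C, hC⟩ := hs.exists_bound_of_continuousOn (hA φ).continuousOn
    exact ⟨C, fun t => hC t t.2⟩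
  exact ⟨M, fun t ht => hM ⟨t, ht⟩⟩

theorem norm_intervalIntegral_sub_le {G : Type*} [NormedAddCommGroup G] [NormedSpace ℝ G]
    {f : ℝ → G} (hf : Continuous f) {lo hi K a b c d : ℝ}
    (hK : ∀ t ∈ Icc lo hi, ‖f t‖ ≤ K) (ha : a ∈ Icc lo hi) (hb : b ∈ Icc lo hi)
    (hc : c ∈ Icc lo hi) (hd : d ∈ Icc lo hi) :
    ‖(∫ t in a..b, f t) - ∫ t in c..d, f t‖ ≤ K * |c - a| + K * |d - b| := by
  have hbound : ∀ x y, x ∈ Icc lo hi → y ∈ Icc lo hi → ‖∫ t in x..y, f t‖ ≤ K * |y - x| :=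
    fun x y hx hy => intervalIntegral.norm_integral_le_of_norm_le_const fun t ht =>
      hK t (uIcc_subset_Icc hx hy (uIoc_subset_uIcc ht))
  rw [intervalIntegral.integral_interval_sub_interval_comm (hf.intervalIntegrable _ _)
    (hf.intervalIntegrable _ _) (hf.intervalIntegrable _ _)]
  exact (norm_sub_le _ _).trans (add_le_add (hbound a c ha hc) (hbound b d hb hd))

section Sampling

variable {E G : Type*} [NormedAddCommGroup E] [NormedSpace ℝ E]
  [NormedAddCommGroup G] [NormedSpace ℝ G]

noncomputable def sampleIntegral (A : ℝ → E →L[ℝ] E) (P : E →L[ℝ] G) (T : ℝ) (i : ℕ)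
    (φ : E) : G :=
  ∫ t in (i : ℝ) * T..((i : ℝ) + 1) * T, P (A t φ)

def WeakObservabilityIneq (A : ℝ → E →L[ℝ] E) (P : E →L[ℝ] G) (T : ℝ) (N : ℕ) (δ : ℝ) : Prop :=
  ∃ C : ℝ, 0 ≤ C ∧ ∀ φ : E,
    ‖A (N * T) φ‖ ^ 2 ≤ C * ∑ i ∈ Finset.range N, ‖sampleIntegral A P T i φ‖ ^ 2 + δ * ‖φ‖ ^ 2

variable {A : ℝ → E →L[ℝ] E} {P : E →L[ℝ] G}

theorem WeakObservabilityIneq.mono {T δ δ' : ℝ} {N : ℕ} (h : WeakObservabilityIneq A P T N δ)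
    (hδ : δ ≤ δ') : WeakObservabilityIneq A P T N δ' := by
  obtain ⟨C, hC, h⟩ := h
  exact ⟨C, hC, fun φ => (h φ).trans (by gcongr)⟩

theorem norm_sampleIntegral_sub_le (hAc : ∀ φ, Continuous fun t => A t φ) {T T₀ R K : ℝ}
    (hT : 0 ≤ T) (hT₀ : 0 ≤ T₀) (hK : ∀ t ∈ Icc 0 R, ‖A t‖ ≤ K) {i : ℕ}
    (hiT : ((i : ℝ) + 1) * T ≤ R) (hiT₀ : ((i : ℝ) + 1) * T₀ ≤ R) (φ : E) :
    ‖sampleIntegral A P T₀ i φ - sampleIntegral A P T i φ‖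
      ≤ 2 * (‖P‖ * K * ‖φ‖) * (((i : ℝ) + 1) * |T - T₀|) := by
  have hR : 0 ≤ R := (by positivity : (0 : ℝ) ≤ (i + 1) * T).trans hiT
  have hK₀ : 0 ≤ K := (norm_nonneg _).trans (hK 0 ⟨le_rfl, hR⟩)
  have hbound : ∀ t ∈ Icc 0 R, ‖P (A t φ)‖ ≤ ‖P‖ * K * ‖φ‖ := fun t ht => by
    rw [mul_assoc]
    exact P.le_opNorm_of_le ((A t).le_of_opNorm_le (hK t ht) φ)
  have hmem : ∀ j : ℝ, 0 ≤ j → j ≤ (i : ℝ) + 1 → ∀ τ, 0 ≤ τ → (i + 1) * τ ≤ R →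
      j * τ ∈ Icc 0 R := fun j hj0 hj τ hτ hτR =>
    ⟨by positivity, (by gcongr : j * τ ≤ (i + 1) * τ).trans hτR⟩
  have hi : (0 : ℝ) ≤ i := i.cast_nonneg
  refine (norm_intervalIntegral_sub_le ((P.continuous.comp (hAc φ))) hbound
    (hmem _ hi (by linarith) _ hT₀ hiT₀) (hmem _ (by linarith) le_rfl _ hT₀ hiT₀)
    (hmem _ hi (by linarith) _ hT hiT) (hmem _ (by linarith) le_rfl _ hT hiT)).trans ?_
  rw [← mul_sub, ← mul_sub, abs_mul, abs_mul, abs_of_nonneg hi,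
    abs_of_nonneg (by linarith : (0 : ℝ) ≤ i + 1)]
  have : 0 ≤ ‖P‖ * K * ‖φ‖ := by positivity
  nlinarith [abs_nonneg (T - T₀)]

theorem sum_sq_sampleIntegral_le (hAc : ∀ φ, Continuous fun t => A t φ) {T T₀ R K : ℝ}
    (hT : 0 ≤ T) (hT₀ : 0 ≤ T₀) (hK : ∀ t ∈ Icc 0 R, ‖A t‖ ≤ K) {n N : ℕ} (hn : n ≤ N)
    (hNT : N * T ≤ R) (hNT₀ : N * T₀ ≤ R) (φ : E) :
    ∑ i ∈ Finset.range n, ‖sampleIntegral A P T₀ i φ‖ ^ 2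
      ≤ 2 * ∑ i ∈ Finset.range N, ‖sampleIntegral A P T i φ‖ ^ 2
        + 2 * n * (2 * (‖P‖ * K * ‖φ‖) * (N * |T - T₀|)) ^ 2 := by
  set η := 2 * (‖P‖ * K * ‖φ‖) * (N * |T - T₀|) with hη
  have hterm : ∀ i ∈ Finset.range n,
      ‖sampleIntegral A P T₀ i φ‖ ^ 2 ≤ 2 * ‖sampleIntegral A P T i φ‖ ^ 2 + 2 * η ^ 2 := by
    intro i hi
    have hiN : (i : ℝ) + 1 ≤ N := by
      exact_mod_cast (Finset.mem_range.1 hi).trans_le hn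
    have hK₀ : 0 ≤ K :=
      (norm_nonneg _).trans (hK 0 ⟨le_rfl, (by positivity : (0 : ℝ) ≤ N * T).trans hNT⟩)
    have hdiff : ‖sampleIntegral A P T₀ i φ - sampleIntegral A P T i φ‖ ≤ η :=
      (norm_sampleIntegral_sub_le hAc hT hT₀ hK
        ((by gcongr : ((i : ℝ) + 1) * T ≤ N * T).trans hNT)
        ((by gcongr : ((i : ℝ) + 1) * T₀ ≤ N * T₀).trans hNT₀) φ).trans (by rw [hη]; gcongr)
    calc ‖sampleIntegral A P T₀ i φ‖ ^ 2
        ≤ (‖sampleIntegral A P T i φ‖ + η) ^ 2 := by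
          gcongr
          exact (norm_le_norm_add_norm_sub' _ _).trans (add_le_add_right hdiff _)
      _ ≤ 2 * ‖sampleIntegral A P T i φ‖ ^ 2 + 2 * η ^ 2 := by
          linarith [add_sq_le (a := ‖sampleIntegral A P T i φ‖) (b := η)]
  calc ∑ i ∈ Finset.range n, ‖sampleIntegral A P T₀ i φ‖ ^ 2
      ≤ ∑ i ∈ Finset.range n, (2 * ‖sampleIntegral A P T i φ‖ ^ 2 + 2 * η ^ 2) :=
        Finset.sum_le_sum hterm
    _ = 2 * ∑ i ∈ Finset.range n, ‖sampleIntegral A P T i φ‖ ^ 2 + 2 * n * η ^ 2 := by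
        rw [Finset.sum_add_distrib, ← Finset.mul_sum, Finset.sum_const, Finset.card_range,
          nsmul_eq_mul]
        ring
    _ ≤ 2 * ∑ i ∈ Finset.range N, ‖sampleIntegral A P T i φ‖ ^ 2 + 2 * n * η ^ 2 := by
        gcongr

theorem WeakObservabilityIneq.of_nearby_period (hAc : ∀ φ, Continuous fun t => A t φ)
    {T T₀ R K M C δ : ℝ} {n N : ℕ} (hT : 0 ≤ T) (hT₀ : 0 ≤ T₀) (hK : ∀ t ∈ Icc 0 R, ‖A t‖ ≤ K)
    (hn : n ≤ N) (hNT : N * T ≤ R) (hNT₀ : N * T₀ ≤ R) (hM : ∀ φ, ‖A (N * T) φ‖ ≤ M * ‖A (n * T₀) φ‖)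
    (hC : 0 ≤ C) (h : ∀ φ, ‖A (n * T₀) φ‖ ^ 2
      ≤ C * ∑ i ∈ Finset.range n, ‖sampleIntegral A P T₀ i φ‖ ^ 2 + δ * ‖φ‖ ^ 2) :
    WeakObservabilityIneq A P T N (M ^ 2 * (2 * C * n * (2 * ‖P‖ * K * N * |T - T₀|) ^ 2 + δ)) := by
  refine ⟨2 * M ^ 2 * C, by positivity, fun φ => ?_⟩
  calc ‖A (N * T) φ‖ ^ 2 ≤ M ^ 2 * ‖A (n * T₀) φ‖ ^ 2 := by
        rw [← mul_pow]; gcongr; exact hM φ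
    _ ≤ M ^ 2 * (C * (2 * ∑ i ∈ Finset.range N, ‖sampleIntegral A P T i φ‖ ^ 2
          + 2 * n * (2 * (‖P‖ * K * ‖φ‖) * (N * |T - T₀|)) ^ 2) + δ * ‖φ‖ ^ 2) := by
        gcongr
        exact (h φ).trans (by gcongr; exact sum_sq_sampleIntegral_le hAc hT hT₀ hK hn hNT hNT₀ φ)
    _ = _ := by ring

variable (hA : ∀ s t : ℝ, 0 ≤ s → 0 ≤ t → A (s + t) = (A s).comp (A t))
include hA

theorem sampleIntegral_apply_mul {T : ℝ} (hT : 0 ≤ T) (n i : ℕ) (φ : E) :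
    sampleIntegral A P T i (A (n * T) φ) = sampleIntegral A P T (n + i) φ := by
  have hshift : EqOn (fun t => P (A t (A (n * T) φ))) (fun t => P (A (t + n * T) φ))
      (uIcc ((i : ℝ) * T) (((i : ℝ) + 1) * T)) := by
    intro t ht
    have ht0 : 0 ≤ t := (le_min (by positivity) (by positivity)).trans ht.1
    simp only [hA t (n * T) ht0 (by positivity), ContinuousLinearMap.comp_apply]
  unfold sampleIntegral
  rw [intervalIntegral.integral_congr hshift,
    intervalIntegral.integral_comp_add_right (fun t => P (A t φ))]
  push_cast
  congr 1 <;> ring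

theorem WeakObservabilityIneq.add {T δ₁ δ₂ : ℝ} {N₁ N₂ : ℕ} (hT : 0 ≤ T) (hδ₁ : 0 ≤ δ₁)
    (h₁ : WeakObservabilityIneq A P T N₁ δ₁) (h₂ : WeakObservabilityIneq A P T N₂ δ₂) :
    WeakObservabilityIneq A P T (N₂ + N₁) (δ₁ * δ₂) := by
  obtain ⟨C₁, hC₁, h₁⟩ := h₁
  obtain ⟨C₂, hC₂, h₂⟩ := h₂
  refine ⟨C₁ + δ₁ * C₂, by positivity, fun φ => ?_⟩
  set J := fun i => ‖sampleIntegral A P T i φ‖ ^ 2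
  have hJ : ∀ i, 0 ≤ J i := fun i => by positivity
  have hsplit : ‖A ((N₂ + N₁ : ℕ) * T) φ‖ = ‖A (N₁ * T) (A (N₂ * T) φ)‖ := by
    rw [Nat.cast_add, add_comm, add_mul, hA _ _ (by positivity) (by positivity)]
    rfl
  calc ‖A ((N₂ + N₁ : ℕ) * T) φ‖ ^ 2
      ≤ C₁ * ∑ i ∈ Finset.range N₁, J (N₂ + i) + δ₁ * ‖A (N₂ * T) φ‖ ^ 2 := by
        simpa only [hsplit, sampleIntegral_apply_mul hA hT] using h₁ (A (N₂ * T) φ)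
    _ ≤ C₁ * ∑ i ∈ Finset.range N₁, J (N₂ + i)
        + δ₁ * (C₂ * ∑ i ∈ Finset.range N₂, J i + δ₂ * ‖φ‖ ^ 2) := by gcongr; exact h₂ φ
    _ ≤ (C₁ + δ₁ * C₂) * ∑ i ∈ Finset.range (N₂ + N₁), J i + δ₁ * δ₂ * ‖φ‖ ^ 2 := by
        have h₁' := Finset.sum_nonneg fun i (_ : i ∈ Finset.range N₁) => hJ (N₂ + i)
        have h₂' := Finset.sum_nonneg fun i (_ : i ∈ Finset.range N₂) => hJ i
        rw [Finset.sum_range_add]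
        nlinarith [mul_nonneg hC₁ h₂', mul_nonneg (mul_nonneg hδ₁ hC₂) h₁']

theorem WeakObservabilityIneq.pow {T δ : ℝ} {N : ℕ} (hT : 0 ≤ T) (hδ : 0 ≤ δ)
    (h : WeakObservabilityIneq A P T N δ) (m : ℕ) :
    WeakObservabilityIneq A P T ((m + 1) * N) (δ ^ (m + 1)) := by
  induction m with
  | zero => simpa using h
  | succ m ih =>
    have h' := h.add hA hT hδ ih
    rwa [← pow_succ', ← add_one_mul] at h'

theorem norm_apply_le_mul_norm_apply {s t L M : ℝ} (hs : 0 ≤ s) (hst : s ≤ t) (htL : t ≤ s + L)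
    (hM : ∀ r ∈ Icc 0 L, ‖A r‖ ≤ M) (φ : E) : ‖A t φ‖ ≤ M * ‖A s φ‖ := by
  have ht : A t φ = A (t - s) (A s φ) := by
    rw [← ContinuousLinearMap.comp_apply, ← hA _ _ (by linarith) hs, sub_add_cancel]
  rw [ht]
  exact (A (t - s)).le_of_opNorm_le (hM _ ⟨by linarith, by linarith⟩) _

theorem WeakObservabilityIneq.exists_eventually_nhds [CompleteSpace E]
    (hAc : ∀ φ, Continuous fun t => A t φ)
    {T₀ δ : ℝ} {N₀ : ℕ} (hT₀ : 0 < T₀) (hN₀ : 1 ≤ N₀) (hδ₀ : 0 ≤ δ) (hδ₁ : δ < 1)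
    (h : WeakObservabilityIneq A P T₀ N₀ δ) :
    ∃ N, 1 ≤ N ∧ ∀ᶠ T in 𝓝 T₀, WeakObservabilityIneq A P T N (1 / 2) := by
  obtain ⟨M, hM⟩ :=
    exists_norm_le_of_continuous_apply hAc (isCompact_Icc (a := 0) (b := N₀ * (T₀ + 1)))
  obtain ⟨k, hk⟩ : ∃ k : ℕ, M ^ 2 * δ ^ (k + 1) < 1 / 2 := by
    have := ((tendsto_pow_atTop_nhds_zero_of_lt_one hδ₀ hδ₁).const_mul (M ^ 2)).eventually
      (gt_mem_nhds (by norm_num : M ^ 2 * 0 < 1 / 2))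
    obtain ⟨k, hk⟩ := eventually_atTop.1 this
    exact ⟨k, hk (k + 1) (by omega)⟩
  -- `N T` is compared with `n T₀`, not `N T₀`: their gap stays in `[0, N₀ (T₀ + 1)]`,
  -- where the bound `M`, chosen before `k`, applies.
  set n := (k + 1) * N₀
  set N := n + N₀ with hN
  obtain ⟨C, hC, hCn⟩ := h.pow hA hT₀.le hδ₀ k
  obtain ⟨K, hK⟩ :=
    exists_norm_le_of_continuous_apply hAc (isCompact_Icc (a := 0) (b := N * (T₀ + 1)))
  refine ⟨N, by omega, ?_⟩
  have hN₀' : (0 : ℝ) < N₀ := by exact_mod_cast hN₀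
  have hNcast : (N : ℝ) = n + N₀ := by rw [hN, Nat.cast_add]
  have hNT : Continuous fun T : ℝ => (N : ℝ) * T := by fun_prop
  have hδ' : Continuous fun T =>
      M ^ 2 * (2 * C * n * (2 * ‖P‖ * K * N * |T - T₀|) ^ 2 + δ ^ (k + 1)) := by
    fun_prop
  have hδ'₀ : M ^ 2 * (2 * C * n * (2 * ‖P‖ * K * N * |T₀ - T₀|) ^ 2 + δ ^ (k + 1)) < 1 / 2 := by
    simpa using hk
  filter_upwards [Ioi_mem_nhds hT₀, Iio_mem_nhds (lt_add_one T₀),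
    continuousAt_const.eventually_lt hNT.continuousAt
      (by rw [hNcast]; nlinarith : (n : ℝ) * T₀ < N * T₀),
    hNT.continuousAt.eventually_lt continuousAt_const
      (by rw [hNcast]; nlinarith : (N : ℝ) * T₀ < n * T₀ + N₀ * (T₀ + 1)),
    hδ'.continuousAt.eventually_lt continuousAt_const hδ'₀]
    with T hT hT1 hlo hhi hsmall
  exact (WeakObservabilityIneq.of_nearby_period hAc hT.le hT₀.le hK (by omega)
    (by gcongr; exact hT1.le) (by gcongr; linarith)
    (norm_apply_le_mul_norm_apply hA (by positivity) hlo.le hhi.le hM) hC hCn).mono hsmall.le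

theorem isOpen_setOf_weakObservabilityIneq [CompleteSpace E]
    (hAc : ∀ φ, Continuous fun t => A t φ) :
    IsOpen {T : ℝ | 0 < T ∧ ∃ N : ℕ, 1 ≤ N ∧ ∃ δ ∈ Ioo (0 : ℝ) 1,
      WeakObservabilityIneq A P T N δ} := by
  refine isOpen_iff_mem_nhds.2 ?_
  rintro T₀ ⟨hT₀, N₀, hN₀, δ, ⟨hδ₀, hδ₁⟩, h⟩
  obtain ⟨N, hN, hev⟩ := h.exists_eventually_nhds hA hAc hT₀ hN₀ hδ₀.le hδ₁
  filter_upwards [Ioi_mem_nhds hT₀, hev] with T hT hT'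
  exact ⟨hT, N, hN, 1 / 2, ⟨by norm_num, by norm_num⟩, hT'⟩

end Sampling

theorem stmt16_general {Y U : Type*}
    [NormedAddCommGroup Y] [InnerProductSpace ℝ Y] [CompleteSpace Y]
    [NormedAddCommGroup U] [InnerProductSpace ℝ U] [CompleteSpace U]
    (S : ℝ → Y →L[ℝ] Y)
    (hsemi : ∀ s t : ℝ, 0 ≤ s → 0 ≤ t → S (s + t) = (S s).comp (S t))
    (hcont : ∀ φ : Y, Continuous fun t : ℝ => (ContinuousLinearMap.adjoint (S t)) φ)
    (B : U →L[ℝ] Y) :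
    IsOpen {T : ℝ | 0 < T ∧ ∃ N : ℕ, 1 ≤ N ∧ ∃ δ ∈ Set.Ioo (0 : ℝ) 1, ∃ C : ℝ, 0 ≤ C ∧
      ∀ φ : Y,
        ‖(ContinuousLinearMap.adjoint (S (N * T))) φ‖ ^ 2 ≤
          C * ∑ i ∈ Finset.range N,
            ‖∫ t in ((i : ℝ) * T)..(((i : ℝ) + 1) * T),
              (ContinuousLinearMap.adjoint B) ((ContinuousLinearMap.adjoint (S t)) φ)‖ ^ 2
          + δ * ‖φ‖ ^ 2} :=
  isOpen_setOf_weakObservabilityIneq (A := fun t => ContinuousLinearMap.adjoint (S t))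
    (P := ContinuousLinearMap.adjoint B)
    (fun _ _ hs ht => ContinuousLinearMap.adjoint_semigroup_add hsemi hs ht) hcont

/-- The set of sampling periods `T > 0` for which the discrete weak observability
inequality (characterizing (DC)_T-stabilizability) holds is open in `ℝ`. -/
theorem stmt16 {Y U : Type*}
    [NormedAddCommGroup Y] [InnerProductSpace ℝ Y] [CompleteSpace Y]
    [NormedAddCommGroup U] [InnerProductSpace ℝ U] [CompleteSpace U]
    (S : ℝ → Y →L[ℝ] Y)
    (hS0 : S 0 = ContinuousLinearMap.id ℝ Y)
    (hsemi : ∀ s t : ℝ, 0 ≤ s → 0 ≤ t → S (s + t) = (S s).comp (S t))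
    (hcont : ∀ φ : Y, Continuous fun t : ℝ => (ContinuousLinearMap.adjoint (S t)) φ)
    (hbdd : ∀ a : ℝ, ∃ Ma : ℝ, ∀ t ∈ Set.Icc (0 : ℝ) a, ‖S t‖ ≤ Ma)
    (B : U →L[ℝ] Y) :
    IsOpen {T : ℝ | 0 < T ∧ ∃ N : ℕ, 1 ≤ N ∧ ∃ δ ∈ Set.Ioo (0 : ℝ) 1, ∃ C : ℝ, 0 ≤ C ∧
      ∀ φ : Y,
        ‖(ContinuousLinearMap.adjoint (S (N * T))) φ‖ ^ 2 ≤
          C * ∑ i ∈ Finset.range N,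
            ‖∫ t in ((i : ℝ) * T)..(((i : ℝ) + 1) * T),
              (ContinuousLinearMap.adjoint B) ((ContinuousLinearMap.adjoint (S t)) φ)‖ ^ 2
          + δ * ‖φ‖ ^ 2} :=
  stmt16_general S hsemi hcont B
end
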